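/- Let Γ : ℝ → ℝ³ and v : ℝ → ℝ³ be smooth L-periodic maps, and let a ∈ ℝ³ be a fixed vector. Then ∫₀ᴸ det(Γ'(t), Γ(t) × a, v(t)) dt = − ∫₀ᴸ [(v(t)·Γ'(t))(Γ(t)·a) + (Γ(t)·v'(t))(Γ(t)·a) + (Γ(t)·Γ'(t))(v(t)·a)] dt, and both sides equal ∫₀ᴸ [(Γ'(t)·a)(Γ(t)·v(t)) − (Γ'(t)·Γ(t))(a·v(t))] dt. (The contraction i_{Γ×a}Ω equals the differential of J_a(Γ) = −∫ (Γ·Γ')(Γ·a) dt.) -/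

import Mathlib

open scoped RealInnerProductSpace

/-- Determinant of three vectors of `ℝ³` (as columns). -/
noncomputable def det3 (a b c : EuclideanSpace ℝ (Fin 3)) : ℝ :=
  a 0 * (b 1 * c 2 - b 2 * c 1) - a 1 * (b 0 * c 2 - b 2 * c 0) +
    a 2 * (b 0 * c 1 - b 1 * c 0)

/-- Cross product of two vectors of `ℝ³`. -/
noncomputable def cross3 (a b : EuclideanSpace ℝ (Fin 3)) : EuclideanSpace ℝ (Fin 3) :=
  (WithLp.equiv 2 (Fin 3 → ℝ)).symm
    ![a 1 * b 2 - a 2 * b 1, a 2 * b 0 - a 0 * b 2, a 0 * b 1 - a 1 * b 0]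

lemma det3_cross (g x y a : EuclideanSpace ℝ (Fin 3)) :
    det3 g (cross3 x a) y = ⟪g, a⟫ * ⟪x, y⟫ - ⟪g, x⟫ * ⟪a, y⟫ := by
  simp [det3, cross3, PiLp.inner_apply, Fin.sum_univ_three, RCLike.inner_apply,
    PiLp.toLp_apply]
  ring

/-- The contraction `i_{Γ×a} Ω` equals the differential of
`J_a(Γ) = −∫ (Γ·Γ')(Γ·a) dt`, both being `∫ [(Γ'·a)(Γ·v) − (Γ'·Γ)(a·v)] dt`. -/
theorem iGammaCrossA_Omega_eq_dJa (L : ℝ) (hL : 0 < L)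
    (Γ v : ℝ → EuclideanSpace ℝ (Fin 3))
    (hΓ : ContDiff ℝ (⊤ : ℕ∞) Γ) (hΓper : Function.Periodic Γ L)
    (hv : ContDiff ℝ (⊤ : ℕ∞) v) (hvper : Function.Periodic v L)
    (a : EuclideanSpace ℝ (Fin 3)) :
    (∫ t in (0:ℝ)..L, det3 (deriv Γ t) (cross3 (Γ t) a) (v t)
        = -∫ t in (0:ℝ)..L,
            (⟪v t, deriv Γ t⟫ * ⟪Γ t, a⟫ + ⟪Γ t, deriv v t⟫ * ⟪Γ t, a⟫ +
              ⟪Γ t, deriv Γ t⟫ * ⟪v t, a⟫)) ∧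
      ∫ t in (0:ℝ)..L, det3 (deriv Γ t) (cross3 (Γ t) a) (v t)
        = ∫ t in (0:ℝ)..L,
            (⟪deriv Γ t, a⟫ * ⟪Γ t, v t⟫ - ⟪deriv Γ t, Γ t⟫ * ⟪a, v t⟫) := by
  have dΓ : Differentiable ℝ Γ := hΓ.differentiable (by simp)
  have dv : Differentiable ℝ v := hv.differentiable (by simp)
  have cΓ : Continuous Γ := hΓ.continuous
  have cv : Continuous v := hv.continuous
  have cΓ' : Continuous (deriv Γ) := hΓ.continuous_deriv (by simp)
  have cv' : Continuous (deriv v) := hv.continuous_deriv (by simp)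
  set g : ℝ → ℝ := fun t => ⟪Γ t, v t⟫ * ⟪Γ t, a⟫ with hgdef
  set f2 : ℝ → ℝ := fun t => ⟪deriv Γ t, a⟫ * ⟪Γ t, v t⟫ - ⟪deriv Γ t, Γ t⟫ * ⟪a, v t⟫
    with hf2def
  have h2 : ∫ t in (0:ℝ)..L, det3 (deriv Γ t) (cross3 (Γ t) a) (v t)
      = ∫ t in (0:ℝ)..L, f2 t :=
    intervalIntegral.integral_congr fun t _ => det3_cross _ _ _ _
  -- derivative of g
  have hgd : ∀ t, deriv g t = (⟪deriv Γ t, v t⟫ + ⟪Γ t, deriv v t⟫) * ⟪Γ t, a⟫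
      + ⟪Γ t, v t⟫ * ⟪deriv Γ t, a⟫ := by
    intro t
    have h1 : DifferentiableAt ℝ (fun s => ⟪Γ s, v s⟫) t :=
      (dΓ t).inner ℝ (dv t)
    have h2 : DifferentiableAt ℝ (fun s => ⟪Γ s, a⟫) t :=
      (dΓ t).inner ℝ (differentiableAt_const a)
    rw [hgdef]
    rw [deriv_fun_mul h1 h2, deriv_inner_apply ℝ (dΓ t) (dv t),
      deriv_inner_apply ℝ (dΓ t) (differentiableAt_const a)]
    simp only [deriv_const', inner_zero_right, add_zero]
    ring
  have hgc' : Continuous (deriv g) := by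
    have : deriv g = fun t => (⟪deriv Γ t, v t⟫ + ⟪Γ t, deriv v t⟫) * ⟪Γ t, a⟫
        + ⟪Γ t, v t⟫ * ⟪deriv Γ t, a⟫ := funext hgd
    rw [this]
    exact ((cΓ'.inner cv).add (cΓ.inner cv')).mul (cΓ.inner continuous_const) |>.add
      ((cΓ.inner cv).mul (cΓ'.inner continuous_const))
  have hint : ∫ t in (0:ℝ)..L, deriv g t = g L - g 0 := by
    apply intervalIntegral.integral_deriv_eq_sub
    · intro x _
      exact ((dΓ x).inner ℝ (dv x)).mul ((dΓ x).inner ℝ (differentiableAt_const a))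
    · exact hgc'.intervalIntegrable _ _
  have hgper : g L = g 0 := by
    have h1 := hΓper 0
    have h2 := hvper 0
    simp only [zero_add] at h1 h2
    simp [hgdef, h1, h2]
  have hint0 : ∫ t in (0:ℝ)..L, deriv g t = 0 := by rw [hint, hgper, sub_self]
  -- pointwise rewrite of sum
  have hpt : ∀ t, (⟪v t, deriv Γ t⟫ * ⟪Γ t, a⟫ + ⟪Γ t, deriv v t⟫ * ⟪Γ t, a⟫ +
      ⟪Γ t, deriv Γ t⟫ * ⟪v t, a⟫) = deriv g t - f2 t := by
    intro t
    rw [hgd t, hf2def]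
    simp only
    rw [real_inner_comm (v t) (deriv Γ t), real_inner_comm (Γ t) (deriv Γ t),
      real_inner_comm (a) (v t)]
    ring
  have hif2 : IntervalIntegrable f2 MeasureTheory.volume 0 L := by
    apply Continuous.intervalIntegrable
    rw [hf2def]
    exact ((cΓ'.inner continuous_const).mul (cΓ.inner cv)).sub
      ((cΓ'.inner cΓ).mul (continuous_const.inner cv))
  have hig : IntervalIntegrable (deriv g) MeasureTheory.volume 0 L :=
    hgc'.intervalIntegrable _ _
  have h1 : ∫ t in (0:ℝ)..L,
      (⟪v t, deriv Γ t⟫ * ⟪Γ t, a⟫ + ⟪Γ t, deriv v t⟫ * ⟪Γ t, a⟫ +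
        ⟪Γ t, deriv Γ t⟫ * ⟪v t, a⟫) = - ∫ t in (0:ℝ)..L, f2 t := by
    rw [intervalIntegral.integral_congr (fun t _ => hpt t),
      intervalIntegral.integral_sub hig hif2, hint0, zero_sub]
  exact ⟨by rw [h2, h1, neg_neg], h2⟩
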